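/- Let 𝔸 = (A, ≤, →, Σ) be an implicative algebra with |A| < κ for a strongly inaccessible cardinal κ, and let W, ∈_W, =_W and the interpretation ‖·‖ be as defined below. Then W validates the Extensionality axiom: ‖∀x ∀y ((x ⊆ y ∧ y ⊆ x) → x = y)‖ ∈ Σ, where x ⊆ y abbreviates ∀z(z ∈ x → z ∈ y). -/

import Mathlib

universe u

/-- An implicative algebra `𝔸 = (A, ≤, →, Σ)`:  a complete lattice `(A, ≤)` together with an
implication `imp` which is antitone in its first argument, monotone in its second argument and
turns infima in the second argument into infima, and a separator `Sig ⊆ A` which is upward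
closed, closed under modus ponens and contains the combinators `K` and `S`. -/
structure ImplicativeAlgebra (A : Type u) [CompleteLattice A] where
  imp : A → A → A
  imp_antitone : ∀ ⦃a a' b : A⦄, a ≤ a' → imp a' b ≤ imp a b
  imp_monotone : ∀ ⦃a b b' : A⦄, b ≤ b' → imp a b ≤ imp a b'
  imp_sInf : ∀ (a : A) (S : Set A), imp a (sInf S) = ⨅ b ∈ S, imp a b
  Sig : Set A
  Sig_upward : ∀ ⦃a b : A⦄, a ∈ Sig → a ≤ b → b ∈ Sig
  Sig_mp : ∀ ⦃a b : A⦄, imp a b ∈ Sig → a ∈ Sig → b ∈ Sig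
  Sig_K : (⨅ a : A, ⨅ b : A, imp a (imp b a)) ∈ Sig
  Sig_S : (⨅ a : A, ⨅ b : A, ⨅ c : A,
      imp (imp a (imp b c)) (imp (imp a b) (imp a c))) ∈ Sig

namespace ImplicativeAlgebra

variable {A : Type u} [CompleteLattice A]

/-- `a × b := ⨅ x, ((a → (b → x)) → x)`. -/
def times (IA : ImplicativeAlgebra A) (a b : A) : A :=
  ⨅ x : A, IA.imp (IA.imp a (IA.imp b x)) x

/-- `a + b := ⨅ x, ((a → x) → ((b → x) → x))`. -/
def plus (IA : ImplicativeAlgebra A) (a b : A) : A :=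
  ⨅ x : A, IA.imp (IA.imp a x) (IA.imp (IA.imp b x) x)

/-- `∃⃗_{i} f i := ⨅ x, ((⨅ i, (f i → x)) → x)`.  (`∀⃗` is just `⨅`.) -/
def aex (IA : ImplicativeAlgebra A) {ι : Sort*} (f : ι → A) : A :=
  ⨅ x : A, IA.imp (⨅ i, IA.imp (f i) x) x

/-- `φ ⊢_{Σ[I]} ψ` iff `⨅ i, (φ i → ψ i) ∈ Σ`. -/
def SigLe (IA : ImplicativeAlgebra A) {ι : Sort*} (f g : ι → A) : Prop :=
  (⨅ i, IA.imp (f i) (g i)) ∈ IA.Sig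

/-- `φ ≡_{Σ[I]} ψ` iff `φ ⊢_{Σ[I]} ψ` and `ψ ⊢_{Σ[I]} φ`. -/
def SigEquiv (IA : ImplicativeAlgebra A) {ι : Sort*} (f g : ι → A) : Prop :=
  IA.SigLe f g ∧ IA.SigLe g f

end ImplicativeAlgebra

/-- Pre-elements of the cumulative hierarchy of partial functions valued in `A`:
an element is an `A`-labelled family of previously constructed elements, i.e. a partial
function (presented by a family indexed by its domain) from earlier elements to `A`. -/
inductive PreW (A : Type u) : Type (u + 1)
  | mk (ι : Type u) (fam : ι → PreW A) (val : ι → A)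

namespace PreW

variable {A : Type u}

/-- The (index type of the) domain of a partial function. -/
def dom : PreW A → Type u
  | ⟨ι, _, _⟩ => ι

/-- The family of elements of the domain. -/
def fam : (w : PreW A) → w.dom → PreW A
  | ⟨_, f, _⟩ => f

/-- The values in `A` of the partial function. -/
def val : (w : PreW A) → w.dom → A
  | ⟨_, _, v⟩ => v

/-- `w` is hereditarily of size `< κ`:  this carves out exactly the elements of the stage
`W_κ` of the hierarchy (for `κ` inaccessible). -/
def HSmall (κ : Cardinal.{u}) : PreW A → Prop
  | ⟨ι, f, _⟩ => Cardinal.mk ι < κ ∧ ∀ i, HSmall κ (f i)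

theorem HSmall.fam {κ : Cardinal.{u}} :
    ∀ {w : PreW A}, w.HSmall κ → ∀ i : w.dom, (w.fam i).HSmall κ
  | ⟨_, _, _⟩, h, i => h.2 i

/-- The rank of an element of the hierarchy. -/
noncomputable def rank : PreW A → Ordinal.{u}
  | ⟨_, f, _⟩ => ⨆ i, Order.succ (rank (f i))

theorem rank_lt_mk {ι : Type u} (f : ι → PreW A) (v : ι → A) (i : ι) :
    (f i).rank < (PreW.mk ι f v).rank := by
  have h : Order.succ (f i).rank ≤ ⨆ j, Order.succ (f j).rank := Ordinal.le_iSup _ i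
  have : (f i).rank < ⨆ j, Order.succ (f j).rank :=
    lt_of_lt_of_le (Order.lt_succ _) h
  simpa [rank] using this

end PreW

namespace ImplicativeAlgebra

variable {A : Type u} [CompleteLattice A]

/-- `α =_W β`, defined by recursion on rank:
`α =_W β := (α ⊆_W β) × (β ⊆_W α)` where
`α ⊆_W β := ∀⃗_{t ∈ dom α} (α t → (fam α t ∈_W β))` and
`γ ∈_W β := ∃⃗_{s ∈ dom β} (β s × (fam β s =_W γ))`. -/
noncomputable def eqW (IA : ImplicativeAlgebra A) : PreW A → PreW A → A
  | ⟨ι₁, f₁, v₁⟩, ⟨ι₂, f₂, v₂⟩ =>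
    IA.times
      (⨅ t : ι₁, IA.imp (v₁ t)
        (IA.aex fun s : ι₂ => IA.times (v₂ s) (IA.eqW (f₂ s) (f₁ t))))
      (⨅ t : ι₂, IA.imp (v₂ t)
        (IA.aex fun s : ι₁ => IA.times (v₁ s) (IA.eqW (f₁ s) (f₂ t))))
termination_by α β => max α.rank β.rank
decreasing_by
  · exact max_lt (lt_of_lt_of_le (PreW.rank_lt_mk f₂ v₂ s) (le_max_right _ _))
      (lt_of_lt_of_le (PreW.rank_lt_mk f₁ v₁ t) (le_max_left _ _))
  · exact max_lt (lt_of_lt_of_le (PreW.rank_lt_mk f₁ v₁ s) (le_max_left _ _))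
      (lt_of_lt_of_le (PreW.rank_lt_mk f₂ v₂ t) (le_max_right _ _))

/-- `α ∈_W β := ∃⃗_{s ∈ dom β} (β s × (fam β s =_W α))`. -/
noncomputable def memW (IA : ImplicativeAlgebra A) (α β : PreW A) : A :=
  IA.aex fun s : β.dom => IA.times (β.val s) (IA.eqW (β.fam s) α)

/-- `α ⊆_W β := ∀⃗_{t ∈ dom α} (α t → (fam α t ∈_W β))`. -/
noncomputable def subW (IA : ImplicativeAlgebra A) (α β : PreW A) : A :=
  ⨅ t : α.dom, IA.imp (α.val t) (IA.memW (α.fam t) β)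

end ImplicativeAlgebra

/-- The stage `W = W_κ` of the hierarchy: all hereditarily `< κ`-sized elements. -/
def WSet (A : Type u) (κ : Cardinal.{u}) : Type (u + 1) :=
  {w : PreW A // w.HSmall κ}

/-- An element of the domain of `w ∈ W`, as an element of `W`. -/
def WSet.fam {A : Type u} {κ : Cardinal.{u}} (w : WSet A κ) (i : w.1.dom) : WSet A κ :=
  ⟨w.1.fam i, w.2.fam i⟩

/-- Formulas (in context of length `n`) of the first-order language of set theory, with
(de Bruijn-style) variables `Fin n`, binary predicates `∈` and `=`, connectives `⊥`, `∧`, `∨`,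
`→` and quantifiers `∃`, `∀` (binding the last variable of the enlarged context). -/
inductive SetFormula : ℕ → Type
  | bot {n : ℕ} : SetFormula n
  | mem {n : ℕ} (i j : Fin n) : SetFormula n
  | eq {n : ℕ} (i j : Fin n) : SetFormula n
  | and {n : ℕ} (φ ψ : SetFormula n) : SetFormula n
  | or {n : ℕ} (φ ψ : SetFormula n) : SetFormula n
  | imp {n : ℕ} (φ ψ : SetFormula n) : SetFormula n
  | ex {n : ℕ} (φ : SetFormula (n + 1)) : SetFormula n
  | all {n : ℕ} (φ : SetFormula (n + 1)) : SetFormula n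

namespace SetFormula

/-- Renaming of variables (since the only terms of the language of set theory are variables,
substitution is a special case). -/
def rename : {n m : ℕ} → (Fin n → Fin m) → SetFormula n → SetFormula m
  | _, _, _, .bot => .bot
  | _, _, f, .mem i j => .mem (f i) (f j)
  | _, _, f, .eq i j => .eq (f i) (f j)
  | _, _, f, .and φ ψ => .and (φ.rename f) (ψ.rename f)
  | _, _, f, .or φ ψ => .or (φ.rename f) (ψ.rename f)
  | _, _, f, .imp φ ψ => .imp (φ.rename f) (ψ.rename f)
  | _, _, f, .ex φ => .ex (φ.rename (Fin.snoc (Fin.castSucc ∘ f) (Fin.last _)))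
  | _, _, f, .all φ => .all (φ.rename (Fin.snoc (Fin.castSucc ∘ f) (Fin.last _)))

/-- Universal closure `∀x₁ … ∀xₙ φ` of a formula in context of length `n`. -/
def allClose : {n : ℕ} → SetFormula n → SetFormula 0
  | 0, φ => φ
  | _ + 1, φ => allClose (.all φ)

end SetFormula

namespace ImplicativeAlgebra

variable {A : Type u} [CompleteLattice A]

/-- The interpretation `‖φ[x₁,…,xₙ]‖ : Wⁿ → A` of a formula in context, by recursion on the
structure of `φ`:  atomic formulas are interpreted by `∈_W` and `=_W`, `∧` by `×`, `∨` by `+`,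
`→` by `→`, `∃` by `∃⃗` over `W` and `∀` by `∀⃗` (i.e. `⨅`) over `W`. -/
noncomputable def interp (IA : ImplicativeAlgebra A) (κ : Cardinal.{u}) :
    {n : ℕ} → SetFormula n → (Fin n → WSet A κ) → A
  | _, .bot, _ => ⊥
  | _, .mem i j, v => IA.memW (v i).1 (v j).1
  | _, .eq i j, v => IA.eqW (v i).1 (v j).1
  | _, .and φ ψ, v => IA.times (IA.interp κ φ v) (IA.interp κ ψ v)
  | _, .or φ ψ, v => IA.plus (IA.interp κ φ v) (IA.interp κ ψ v)
  | _, .imp φ ψ, v => IA.imp (IA.interp κ φ v) (IA.interp κ ψ v)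
  | _, .ex φ, v => IA.aex fun β : WSet A κ => IA.interp κ φ (Fin.snoc v β)
  | _, .all φ, v => ⨅ β : WSet A κ, IA.interp κ φ (Fin.snoc v β)

end ImplicativeAlgebra


/-!
The equality `α =_W β` is by definition `(α ⊆_W β) × (β ⊆_W α)`, and `α ⊆_W β` asks to turn
`α(t)` into `α.fam t ∈_W β`. Composing a realizer of `α(t) → α.fam t ∈_W α` with the hypothesis
`∀γ (γ ∈ α → γ ∈ β)` does exactly that, so everything rests on a single realizer of
`γ =_W γ` for all `γ`. Such a realizer unfolds into itself one rank lower, so it is obtained as a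
fixed point `r ≤ F r` of a suitable `F ∈ Σ` and checked by induction on `γ`.

Realizers are written as λ-terms, `λx. f x` being interpreted as `⨅ a, (a → f a)`. A closed
λ-term with constants in `Σ` denotes an element of `Σ`: bracket abstraction turns it into a
combination of `K`, `S` and those constants, which lies in `Σ` and below the λ-term.
-/

namespace ImplicativeAlgebra

section Application

variable {A : Type u} [CompleteLattice A] (IA : ImplicativeAlgebra A)

def app (a b : A) : A := sInf {c | a ≤ IA.imp b c}

theorem le_imp_app (a b : A) : a ≤ IA.imp b (IA.app a b) := by
  rw [app, IA.imp_sInf]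
  exact le_iInf₂ fun _ hc => hc

theorem app_le_iff {a b c : A} : IA.app a b ≤ c ↔ a ≤ IA.imp b c :=
  ⟨fun h => (IA.le_imp_app a b).trans (IA.imp_monotone h), fun h => sInf_le h⟩

theorem app_mono {a a' b b' : A} (ha : a ≤ a') (hb : b ≤ b') :
    IA.app a b ≤ IA.app a' b' :=
  IA.app_le_iff.2 <| ha.trans <| (IA.le_imp_app a' b').trans (IA.imp_antitone hb)

theorem app_imp_le (b c : A) : IA.app (IA.imp b c) b ≤ c :=
  IA.app_le_iff.2 le_rfl

theorem app_mem_Sig {a b : A} (ha : a ∈ IA.Sig) (hb : b ∈ IA.Sig) : IA.app a b ∈ IA.Sig :=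
  IA.Sig_mp (IA.Sig_upward ha (IA.le_imp_app a b)) hb

def K : A := ⨅ a : A, ⨅ b : A, IA.imp a (IA.imp b a)

def S : A := ⨅ a : A, ⨅ b : A, ⨅ c : A,
  IA.imp (IA.imp a (IA.imp b c)) (IA.imp (IA.imp a b) (IA.imp a c))

theorem app_K_le (a b : A) : IA.app (IA.app IA.K a) b ≤ a :=
  IA.app_le_iff.2 <| IA.app_le_iff.2 <| (iInf_le _ a).trans (iInf_le _ b)

theorem app_S_le (a b c : A) :
    IA.app (IA.app (IA.app IA.S a) b) c ≤ IA.app (IA.app a c) (IA.app b c) := by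
  set d := IA.app (IA.app a c) (IA.app b c)
  have ha : a ≤ IA.imp c (IA.imp (IA.app b c) d) :=
    (IA.le_imp_app a c).trans (IA.imp_monotone (IA.le_imp_app _ _))
  have hb : b ≤ IA.imp c (IA.app b c) := IA.le_imp_app b c
  refine IA.app_le_iff.2 <| IA.app_le_iff.2 <| IA.app_le_iff.2 ?_
  calc IA.S ≤ IA.imp (IA.imp c (IA.imp (IA.app b c) d))
        (IA.imp (IA.imp c (IA.app b c)) (IA.imp c d)) :=
        (iInf_le _ c).trans ((iInf_le _ _).trans (iInf_le _ d))
    _ ≤ IA.imp a (IA.imp b (IA.imp c d)) :=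
        (IA.imp_antitone ha).trans (IA.imp_monotone (IA.imp_antitone hb))

def lam (f : A → A) : A := ⨅ a, IA.imp a (f a)

theorem app_lam_le (f : A → A) (a : A) : IA.app (IA.lam f) a ≤ f a :=
  IA.app_le_iff.2 (iInf_le _ a)

theorem lam_le_imp {f : A → A} {a b : A} (h : f a ≤ b) : IA.lam f ≤ IA.imp a b :=
  (iInf_le _ a).trans (IA.imp_monotone h)

theorem le_lam {c : A} {f : A → A} (h : ∀ a, IA.app c a ≤ f a) : c ≤ IA.lam f :=
  le_iInf fun a => IA.app_le_iff.1 (h a)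

end Application

inductive CombTerm {A : Type u} (s : Set A) : ℕ → Type u
  | var {n : ℕ} : Fin n → CombTerm s n
  | const {n : ℕ} : s → CombTerm s n
  | app {n : ℕ} : CombTerm s n → CombTerm s n → CombTerm s n

/-- λ-terms with constants from `s`; variables are de Bruijn levels, `lam` binds `Fin.last n`. -/
inductive LamTerm {A : Type u} (s : Set A) : ℕ → Type u
  | var {n : ℕ} : Fin n → LamTerm s n
  | const {n : ℕ} : s → LamTerm s n
  | app {n : ℕ} : LamTerm s n → LamTerm s n → LamTerm s n
  | lam {n : ℕ} : LamTerm s (n + 1) → LamTerm s n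

variable {A : Type u} [CompleteLattice A] (IA : ImplicativeAlgebra A)

namespace CombTerm

def eval {s : Set A} {n : ℕ} : CombTerm s n → (Fin n → A) → A
  | .var i, v => v i
  | .const a, _ => a
  | .app t t', v => IA.app (eval t v) (eval t' v)

/-- Bracket abstraction of the variable `Fin.last n`. -/
def abs {n : ℕ} : CombTerm IA.Sig (n + 1) → CombTerm IA.Sig n
  | .var i =>
      Fin.lastCases (.app (.app (.const ⟨IA.S, IA.Sig_S⟩) (.const ⟨IA.K, IA.Sig_K⟩))
        (.const ⟨IA.K, IA.Sig_K⟩)) (fun j => .app (.const ⟨IA.K, IA.Sig_K⟩) (.var j)) i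
  | .const a => .app (.const ⟨IA.K, IA.Sig_K⟩) (.const a)
  | .app t t' => .app (.app (.const ⟨IA.S, IA.Sig_S⟩) (abs t)) (abs t')

theorem app_eval_abs_le {n : ℕ} (t : CombTerm IA.Sig (n + 1)) (v : Fin n → A) (a : A) :
    IA.app ((abs IA t).eval IA v) a ≤ t.eval IA (Fin.snoc v a) := by
  induction t with
  | var i =>
    induction i using Fin.lastCases with
    | last =>
      simpa [eval, abs] using (IA.app_S_le _ _ a).trans (IA.app_K_le a _)
    | cast j => simpa [eval, abs] using IA.app_K_le (v j) a
  | const b => simpa [eval, abs] using IA.app_K_le b a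
  | app t t' ih ih' => exact (IA.app_S_le _ _ a).trans (IA.app_mono ih ih')

theorem eval_mem_Sig {n : ℕ} (t : CombTerm IA.Sig n) {v : Fin n → A}
    (hv : ∀ i, v i ∈ IA.Sig) : t.eval IA v ∈ IA.Sig := by
  induction t with
  | var i => exact hv i
  | const a => exact a.2
  | app t t' ih ih' => exact IA.app_mem_Sig ih ih'

end CombTerm

namespace LamTerm

def sem {s : Set A} : {n : ℕ} → LamTerm s n → (Fin n → A) → A
  | _, .var i, v => v i
  | _, .const a, _ => a
  | _, .app t t', v => IA.app (sem t v) (sem t' v)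
  | _, .lam t, v => IA.lam fun a => sem t (Fin.snoc v a)

def compile : {n : ℕ} → LamTerm IA.Sig n → CombTerm IA.Sig n
  | _, .var i => .var i
  | _, .const a => .const a
  | _, .app t t' => .app (compile t) (compile t')
  | _, .lam t => CombTerm.abs IA (compile t)

theorem eval_compile_le {n : ℕ} (t : LamTerm IA.Sig n) (v : Fin n → A) :
    (compile IA t).eval IA v ≤ t.sem IA v := by
  induction t with
  | var _ | const _ => exact le_rfl
  | app t t' ih ih' => exact IA.app_mono (ih v) (ih' v)
  | lam t ih => exact IA.le_lam fun a => (CombTerm.app_eval_abs_le IA _ v a).trans (ih _)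

theorem sem_mem_Sig (t : LamTerm IA.Sig 0) : t.sem IA Fin.elim0 ∈ IA.Sig :=
  IA.Sig_upward ((compile IA t).eval_mem_Sig IA (v := Fin.elim0) nofun) (eval_compile_le IA t Fin.elim0)

end LamTerm

theorem eqW_eq_times_subW (α β : PreW A) :
    IA.eqW α β = IA.times (IA.subW α β) (IA.subW β α) := by
  cases α
  cases β
  rw [eqW]
  rfl

def pair (a b : A) : A := IA.lam fun z => IA.app (IA.app z a) b

theorem pair_le_times {a a' b b' : A} (ha : a ≤ a') (hb : b ≤ b') :
    IA.pair a b ≤ IA.times a' b' :=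
  le_iInf fun _ => IA.lam_le_imp <| IA.app_le_iff.2 <| IA.app_le_iff.2 <|
    (IA.imp_antitone ha).trans (IA.imp_monotone (IA.imp_antitone hb))

theorem app_le_of_le_times {p k a b c : A} (hp : p ≤ IA.times a b)
    (hk : k ≤ IA.imp a (IA.imp b c)) : IA.app p k ≤ c :=
  (IA.app_mono (hp.trans (iInf_le _ c)) hk).trans (IA.app_imp_le _ _)

def exIntro (a : A) : A := IA.lam fun k => IA.app k a

theorem exIntro_le_aex {ι : Sort*} {f : ι → A} {a : A} (i : ι) (h : a ≤ f i) :
    IA.exIntro a ≤ IA.aex f :=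
  le_iInf fun _ => IA.lam_le_imp <| (IA.app_mono (iInf_le _ i) h).trans (IA.app_imp_le _ _)

def comp (p q : A) : A := IA.lam fun a => IA.app p (IA.app q a)

theorem comp_le_imp {p q a b c : A} (hp : p ≤ IA.imp b c) (hq : q ≤ IA.imp a b) :
    IA.comp p q ≤ IA.imp a c :=
  IA.lam_le_imp <| (IA.app_mono hp (IA.app_le_iff.2 hq)).trans (IA.app_imp_le _ _)

theorem exists_mem_Sig_le_app_self {F : A} (hF : F ∈ IA.Sig) :
    ∃ r ∈ IA.Sig, r ≤ IA.app F r := by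
  -- Curry's fixed point `d d` with `d = λx. F (x x)`.
  set d := IA.lam fun x => IA.app F (IA.app x x)
  have hd : d ∈ IA.Sig :=
    LamTerm.sem_mem_Sig IA (.lam (.app (.const ⟨F, hF⟩) (.app (.var 0) (.var 0))))
  exact ⟨IA.app d d, IA.app_mem_Sig hd hd, IA.app_lam_le _ d⟩

def memIntro (r : A) : A := IA.lam fun a => IA.exIntro (IA.pair a r)

theorem memIntro_mem_Sig {r : A} (hr : r ∈ IA.Sig) : IA.memIntro r ∈ IA.Sig :=
  LamTerm.sem_mem_Sig IA
    (.lam (.lam (.app (.var 1) (.lam (.app (.app (.var 2) (.var 0)) (.const ⟨r, hr⟩))))))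

theorem memIntro_le_imp_memW {r : A} (γ : PreW A) (t : γ.dom)
    (hr : r ≤ IA.eqW (γ.fam t) (γ.fam t)) :
    IA.memIntro r ≤ IA.imp (γ.val t) (IA.memW (γ.fam t) γ) :=
  IA.lam_le_imp <| IA.exIntro_le_aex t (IA.pair_le_times le_rfl hr)

def reflStep : A := IA.lam fun r => IA.pair (IA.memIntro r) (IA.memIntro r)

theorem reflStep_mem_Sig : IA.reflStep ∈ IA.Sig :=
  LamTerm.sem_mem_Sig IA
    (.lam (.lam (.app (.app (.var 1)
      (.lam (.lam (.app (.var 3) (.lam (.app (.app (.var 4) (.var 2)) (.var 0)))))))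
      (.lam (.lam (.app (.var 3) (.lam (.app (.app (.var 4) (.var 2)) (.var 0)))))))))

theorem exists_mem_Sig_le_eqW_self : ∃ r ∈ IA.Sig, ∀ γ : PreW A, r ≤ IA.eqW γ γ := by
  obtain ⟨r, hr, hfix⟩ := IA.exists_mem_Sig_le_app_self IA.reflStep_mem_Sig
  refine ⟨r, hr, fun γ => ?_⟩
  induction γ with
  | mk ι f v ih =>
    have hsub : IA.memIntro r ≤ IA.subW (.mk ι f v) (.mk ι f v) :=
      le_iInf fun t => IA.memIntro_le_imp_memW (.mk ι f v) t (ih t)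
    calc r ≤ IA.app IA.reflStep r := hfix
      _ ≤ IA.pair (IA.memIntro r) (IA.memIntro r) := IA.app_lam_le _ r
      _ ≤ IA.eqW (.mk ι f v) (.mk ι f v) := by
        rw [eqW_eq_times_subW]
        exact IA.pair_le_times hsub hsub

def extRealizer (m : A) : A :=
  IA.lam fun h => IA.app h (IA.lam fun p => IA.lam fun q => IA.pair (IA.comp p m) (IA.comp q m))

theorem extRealizer_mem_Sig {m : A} (hm : m ∈ IA.Sig) : IA.extRealizer m ∈ IA.Sig :=
  LamTerm.sem_mem_Sig IA
    (.lam (.app (.var 0) (.lam (.lam (.lam (.app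
      (.app (.var 3) (.lam (.app (.var 1) (.app (.const ⟨m, hm⟩) (.var 4)))))
      (.lam (.app (.var 2) (.app (.const ⟨m, hm⟩) (.var 4))))))))))

theorem extRealizer_le_imp_eqW {α β : PreW A} {m P Q : A}
    (hm : ∀ (γ : PreW A) (t : γ.dom), m ≤ IA.imp (γ.val t) (IA.memW (γ.fam t) γ))
    (hP : ∀ t, P ≤ IA.imp (IA.memW (α.fam t) α) (IA.memW (α.fam t) β))
    (hQ : ∀ t, Q ≤ IA.imp (IA.memW (β.fam t) β) (IA.memW (β.fam t) α)) :
    IA.extRealizer m ≤ IA.imp (IA.times P Q) (IA.eqW α β) := by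
  refine IA.lam_le_imp <| IA.app_le_of_le_times le_rfl <| IA.lam_le_imp <| IA.lam_le_imp ?_
  rw [eqW_eq_times_subW]
  exact IA.pair_le_times (le_iInf fun t => IA.comp_le_imp (hP t) (hm α t))
    (le_iInf fun t => IA.comp_le_imp (hQ t) (hm β t))

end ImplicativeAlgebra

theorem stmt12_general {A : Type u} [CompleteLattice A] (IA : ImplicativeAlgebra A)
    (κ : Cardinal.{u}) :
    IA.interp κ
      (SetFormula.all (SetFormula.all
        (((SetFormula.all ((SetFormula.mem 2 0).imp (SetFormula.mem 2 1))).and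
          (SetFormula.all ((SetFormula.mem 2 1).imp (SetFormula.mem 2 0)))).imp
         (SetFormula.eq 0 1))))
      (fun i => i.elim0) ∈ IA.Sig := by
  obtain ⟨r, hr, hrefl⟩ := IA.exists_mem_Sig_le_eqW_self
  have hm (γ : PreW A) (t : γ.dom) := IA.memIntro_le_imp_memW γ t (hrefl _)
  refine IA.Sig_upward (IA.extRealizer_mem_Sig (IA.memIntro_mem_Sig hr)) ?_
  exact le_iInf₂ fun α β => IA.extRealizer_le_imp_eqW hm
    (fun t => iInf_le _ (α.fam t)) (fun t => iInf_le _ (β.fam t))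

theorem stmt12 {A : Type u} [CompleteLattice A] (IA : ImplicativeAlgebra A)
    (κ : Cardinal.{u}) (hκ : κ.IsInaccessible) (hA : Cardinal.mk A < κ) :
    IA.interp κ
      (SetFormula.all (SetFormula.all
        (((SetFormula.all ((SetFormula.mem 2 0).imp (SetFormula.mem 2 1))).and
          (SetFormula.all ((SetFormula.mem 2 1).imp (SetFormula.mem 2 0)))).imp
         (SetFormula.eq 0 1))))
      (fun i => i.elim0) ∈ IA.Sig :=
  stmt12_general IA κ
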